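/- arXiv:2303.11775 — 4 statements merged into one kernel-verified Lean document; each statement's English description precedes it below -/
import Mathlib

section
/- Theorem 1 (scalar mean-square convergence of the DREM-based distributed estimator): Let (Ω, F, P) be a probability space and let (N(k))_{k∈ℕ} be an independent family of real Gaussian random variables with mean zero and Var(N(k)) ≤ S(k)·C for a constant C ≥ 0. Let μ > 0, let α : ℕ → ℝ be monotonically non-increasing with 0 < α(k) ≤ 1 for all k, ∑_{k=0}^∞ α(k) = ∞ and α(k) → 0, and let S : ℕ → ℝ be nonnegative and satisfy the Local-PE condition: there exist ω > 0 and T ∈ ℕ, T ≥ 1, such that ∑_{t=k}^{k+T-1} S(t) ≥ ω for all k. Define the error process X : ℕ → Ω → ℝ by an arbitrary deterministic X(0) ∈ ℝ and X(k+1) = (1 − α(k)·S(k)/(μ + S(k)))·X(k) + (α(k)/(μ + S(k)))·N(k). Then lim_{k→∞} E[X(k)²] = 0. -/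
open MeasureTheory ProbabilityTheory Filter

section DremAux
open MeasureTheory ProbabilityTheory Filter Real Set
open scoped NNReal ENNReal

lemma integrable_sq_mul_exp_neg_mul_sq {b : ℝ} (hb : 0 < b) :
    Integrable (fun x : ℝ => x ^ 2 * Real.exp (-b * x ^ 2)) := by
  have h := integrable_rpow_mul_exp_neg_mul_sq hb (s := 2) (by norm_num)
  refine h.congr (Filter.Eventually.of_forall fun x => ?_)
  have hx : x ^ (2:ℝ) = x ^ (2:ℕ) := by
    rw [← Real.rpow_natCast x 2]; norm_num
  simp only [hx]

lemma integral_sq_mul_exp_neg_mul_sq {b : ℝ} (hb : 0 < b) :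
    ∫ x : ℝ, x ^ 2 * Real.exp (-b * x ^ 2) = Real.sqrt π / (2 * b * Real.sqrt b) := by
  have h1 : ∫ x : ℝ, x ^ 2 * Real.exp (-b * x ^ 2)
      = 2 * ∫ x in Ioi (0:ℝ), x ^ 2 * Real.exp (-b * x ^ 2) := by
    rw [← integral_comp_abs (f := fun x : ℝ => x ^ 2 * Real.exp (-b * x ^ 2))]
    congr 1 with x
    rw [sq_abs]
  have h2 : ∫ x in Ioi (0:ℝ), x ^ 2 * Real.exp (-b * x ^ 2)
      = b ^ (-(3:ℝ)/2) * (1/2) * Real.Gamma (3/2) := by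
    rw [show ∫ x in Ioi (0:ℝ), x ^ 2 * Real.exp (-b * x ^ 2)
        = ∫ x in Ioi (0:ℝ), x ^ (2:ℝ) * Real.exp (-b * x ^ (2:ℝ)) from
      setIntegral_congr_fun measurableSet_Ioi (fun x _ => by
        have hx : x ^ (2:ℝ) = x ^ (2:ℕ) := by
          rw [← Real.rpow_natCast x 2]; norm_num
        simp only [hx])]
    rw [integral_rpow_mul_exp_neg_mul_rpow (by norm_num) (by norm_num) hb]
    norm_num
  have hGamma : Real.Gamma (3/2) = Real.sqrt π / 2 := by
    rw [show (3/2 : ℝ) = 1/2 + 1 by norm_num, Real.Gamma_add_one (by norm_num),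
      Real.Gamma_one_half_eq]
    ring
  have hbrpow : b ^ (-(3:ℝ)/2) = (b * Real.sqrt b)⁻¹ := by
    rw [show (-(3:ℝ)/2) = -(1 + 1/2) by norm_num, Real.rpow_neg hb.le,
      Real.rpow_add hb, Real.rpow_one, ← Real.sqrt_eq_rpow]
  rw [h1, h2, hGamma, hbrpow]
  have h3 : Real.sqrt b ≠ 0 := by positivity
  field_simp

lemma gaussian_withDensity_integral (v : ℝ≥0) (hv : v ≠ 0) (g : ℝ → ℝ) :
    ∫ x, g x ∂(gaussianReal 0 v) = ∫ x, gaussianPDFReal 0 v x * g x := by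
  rw [gaussianReal_of_var_ne_zero 0 hv]
  have hmeas : Measurable fun x => Real.toNNReal (gaussianPDFReal 0 v x) :=
    (measurable_gaussianPDFReal 0 v).real_toNNReal
  have hrepr : gaussianPDF 0 v
      = fun x => ((Real.toNNReal (gaussianPDFReal 0 v x) : ℝ≥0) : ℝ≥0∞) := rfl
  rw [hrepr, integral_withDensity_eq_integral_smul hmeas]
  congr 1 with x
  rw [NNReal.smul_def, smul_eq_mul, Real.coe_toNNReal _ (gaussianPDFReal_nonneg 0 v x)]

lemma gaussianPDFReal_even (v : ℝ≥0) (x : ℝ) :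
    gaussianPDFReal 0 v (-x) = gaussianPDFReal 0 v x := by
  simp [gaussianPDFReal, neg_sq]

lemma integral_id_gaussianReal0 (v : ℝ≥0) : ∫ x, x ∂(gaussianReal 0 v) = 0 := by
  by_cases hv : v = 0
  · rw [hv, gaussianReal_zero_var]
    simp
  · rw [gaussian_withDensity_integral v hv]
    have h := integral_neg_eq_self (fun x => gaussianPDFReal 0 v x * x)
      (volume : Measure ℝ)
    have h2 : ∫ x, gaussianPDFReal 0 v (-x) * (-x)
        = - ∫ x, gaussianPDFReal 0 v x * x := by
      rw [← integral_neg]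
      congr 1 with x
      rw [gaussianPDFReal_even, mul_neg]
    rw [h2] at h
    linarith

lemma integral_sq_gaussianReal0 (v : ℝ≥0) :
    ∫ x, x ^ 2 ∂(gaussianReal 0 v) = (v : ℝ) := by
  by_cases hv : v = 0
  · rw [hv, gaussianReal_zero_var]
    simp
  · have hv' : (0:ℝ) < (v:ℝ) := NNReal.coe_pos.mpr (pos_iff_ne_zero.2 hv)
    have hb : (0:ℝ) < (2 * (v:ℝ))⁻¹ := by positivity
    rw [gaussian_withDensity_integral v hv]
    have hpt : ∀ x : ℝ, gaussianPDFReal 0 v x * x ^ 2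
        = (Real.sqrt (2 * π * v))⁻¹ * (x ^ 2 * Real.exp (-(2 * (v:ℝ))⁻¹ * x ^ 2)) := by
      intro x
      rw [gaussianPDFReal]
      have : -(x - 0) ^ 2 / (2 * (v:ℝ)) = -(2 * (v:ℝ))⁻¹ * x ^ 2 := by
        field_simp
        ring
      rw [this]
      ring
    simp_rw [hpt]
    rw [integral_const_mul, integral_sq_mul_exp_neg_mul_sq hb]
    have hsq1 : Real.sqrt (2 * π * (v:ℝ)) = Real.sqrt π * Real.sqrt (2 * v) := by
      rw [show 2 * π * (v:ℝ) = π * (2 * v) by ring, Real.sqrt_mul pi_pos.le]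
    have hsq2 : Real.sqrt ((2 * (v:ℝ))⁻¹) = (Real.sqrt (2 * v))⁻¹ := Real.sqrt_inv _
    rw [hsq1, hsq2]
    have h1 : Real.sqrt π ≠ 0 := by positivity
    have h2 : Real.sqrt (2 * (v:ℝ)) ≠ 0 := by positivity
    field_simp

lemma integrable_sq_gaussianReal0 (v : ℝ≥0) :
    Integrable (fun x : ℝ => x ^ 2) (gaussianReal 0 v) := by
  by_cases hv : v = 0
  · rw [hv, gaussianReal_zero_var]
    exact (integrable_const ((0:ℝ) ^ 2)).congr (ae_eq_dirac (fun x : ℝ => x ^ 2)).symm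
  · have hv' : (0:ℝ) < (v:ℝ) := NNReal.coe_pos.mpr (pos_iff_ne_zero.2 hv)
    have hb : (0:ℝ) < (2 * (v:ℝ))⁻¹ := by positivity
    rw [gaussianReal_of_var_ne_zero 0 hv]
    have hmeas : Measurable fun x => Real.toNNReal (gaussianPDFReal 0 v x) :=
      (measurable_gaussianPDFReal 0 v).real_toNNReal
    have hrepr : gaussianPDF 0 v
        = fun x => ((Real.toNNReal (gaussianPDFReal 0 v x) : ℝ≥0) : ℝ≥0∞) := rfl
    rw [hrepr, integrable_withDensity_iff_integrable_coe_smul hmeas]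
    have : Integrable (fun x : ℝ =>
        (Real.sqrt (2 * π * v))⁻¹ * (x ^ 2 * Real.exp (-(2 * (v:ℝ))⁻¹ * x ^ 2))) volume :=
      (integrable_sq_mul_exp_neg_mul_sq hb).const_mul _
    refine this.congr (Filter.Eventually.of_forall fun x => ?_)
    simp only [smul_eq_mul]
    rw [Real.coe_toNNReal _ (gaussianPDFReal_nonneg 0 v x)]
    rw [gaussianPDFReal]
    have : -(x - 0) ^ 2 / (2 * (v:ℝ)) = -(2 * (v:ℝ))⁻¹ * x ^ 2 := by
      field_simp
      ring
    rw [this]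
    ring

lemma det_tendsto (m a c : ℕ → ℝ)
    (hm : ∀ k, 0 ≤ m k) (ha0 : ∀ k, 0 ≤ a k) (ha1 : ∀ k, a k ≤ 1)
    (hc0 : ∀ k, 0 ≤ c k) (hclim : Tendsto c atTop (nhds 0))
    (hdiv : Tendsto (fun n => ∑ j ∈ Finset.range n, a j) atTop atTop)
    (hrec : ∀ k, m (k + 1) ≤ (1 - a k) * m k + a k * c k) :
    Tendsto m atTop (nhds 0) := by
  rw [Metric.tendsto_atTop]
  intro ε hε
  obtain ⟨K, hK⟩ := Metric.tendsto_atTop.1 hclim (ε / 2) (by linarith)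
  have hcK : ∀ n, K ≤ n → c n ≤ ε / 2 := by
    intro n hn
    have := hK n hn
    rw [Real.dist_eq, sub_zero, abs_of_nonneg (hc0 n)] at this
    linarith
  have key : ∀ n, K ≤ n →
      m n ≤ ε / 2 + (∏ j ∈ Finset.Ico K n, (1 - a j)) * m K := by
    intro n hn
    induction n, hn using Nat.le_induction with
    | base =>
      simp only [Finset.Ico_self, Finset.prod_empty, one_mul]
      linarith
    | succ n hn ih =>
      have hP : 0 ≤ ∏ j ∈ Finset.Ico K n, (1 - a j) :=
        Finset.prod_nonneg fun j _ => by linarith [ha1 j]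
      have h1 : m (n + 1) ≤ (1 - a n) * m n + a n * (ε / 2) := by
        have h := hrec n
        have h' : a n * c n ≤ a n * (ε / 2) :=
          mul_le_mul_of_nonneg_left (hcK n hn) (ha0 n)
        linarith
      have h2 : (1 - a n) * m n
          ≤ (1 - a n) * (ε / 2 + (∏ j ∈ Finset.Ico K n, (1 - a j)) * m K) :=
        mul_le_mul_of_nonneg_left ih (by linarith [ha1 n])
      rw [Finset.prod_Ico_succ_top hn]
      nlinarith [ha0 n, ha1 n, hm K, mul_nonneg hP (hm K)]
  have hPle : ∀ n, (∏ j ∈ Finset.Ico K n, (1 - a j))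
      ≤ Real.exp (-(∑ j ∈ Finset.Ico K n, a j)) := by
    intro n
    refine le_trans (Finset.prod_le_prod (fun j _ => by linarith [ha1 j])
      (fun j _ => ?_) (g := fun j => Real.exp (-(a j)))) ?_
    · have := Real.add_one_le_exp (-(a j))
      linarith
    · rw [← Real.exp_sum]
      simp
  have hsum0 : Tendsto (fun n => ∑ j ∈ Finset.Ico K n, a j) atTop atTop := by
    have h1 : Tendsto (fun n => (∑ j ∈ Finset.range n, a j)
        + (-(∑ j ∈ Finset.range K, a j))) atTop atTop :=
      tendsto_atTop_add_const_right atTop _ hdiv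
    refine Tendsto.congr' ?_ h1
    filter_upwards [eventually_ge_atTop K] with n hn
    rw [Finset.sum_Ico_eq_sub _ hn, sub_eq_add_neg]
  have hsum : Tendsto (fun n => Real.exp (-(∑ j ∈ Finset.Ico K n, a j)))
      atTop (nhds 0) :=
    Real.tendsto_exp_atBot.comp (tendsto_neg_atTop_atBot.comp hsum0)
  have hQ : Tendsto (fun n => (∏ j ∈ Finset.Ico K n, (1 - a j)) * m K)
      atTop (nhds 0) := by
    have h0 : Tendsto (fun n => ∏ j ∈ Finset.Ico K n, (1 - a j)) atTop (nhds 0) := by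
      apply squeeze_zero (fun n => Finset.prod_nonneg fun j _ => by linarith [ha1 j])
        hPle hsum
    simpa using h0.mul_const (m K)
  obtain ⟨K₂, hK₂⟩ := Metric.tendsto_atTop.1 hQ (ε / 2) (by linarith)
  refine ⟨max K K₂, fun n hn => ?_⟩
  have hn1 : K ≤ n := le_trans (le_max_left _ _) hn
  have hn2 : K₂ ≤ n := le_trans (le_max_right _ _) hn
  have h3 := hK₂ n hn2
  rw [Real.dist_eq, sub_zero] at h3
  have h4 : (∏ j ∈ Finset.Ico K n, (1 - a j)) * m K < ε / 2 :=
    lt_of_le_of_lt (le_abs_self _) h3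
  rw [Real.dist_eq, sub_zero, abs_of_nonneg (hm n)]
  have := key n hn1
  linarith

lemma ratio_subadd (μ : ℝ) (hμ : 0 < μ) (g : ℕ → ℝ) (hg : ∀ i, 0 ≤ g i) (n : ℕ) :
    (∑ i ∈ Finset.range n, g i) / (μ + ∑ i ∈ Finset.range n, g i)
      ≤ ∑ i ∈ Finset.range n, g i / (μ + g i) := by
  induction n with
  | zero => simp
  | succ n ih =>
    have hA : 0 ≤ ∑ i ∈ Finset.range n, g i := Finset.sum_nonneg fun i _ => hg i
    have hx : 0 ≤ g n := hg n
    rw [Finset.sum_range_succ, Finset.sum_range_succ]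
    set A := ∑ i ∈ Finset.range n, g i with hAdef
    have h1 : (A + g n) / (μ + (A + g n)) = A / (μ + (A + g n)) + g n / (μ + (A + g n)) := by
      rw [← add_div]
    have h2 : A / (μ + (A + g n)) ≤ A / (μ + A) :=
      div_le_div_of_nonneg_left hA (by linarith) (by linarith)
    have h3 : g n / (μ + (A + g n)) ≤ g n / (μ + g n) :=
      div_le_div_of_nonneg_left hx (by linarith) (by linarith)
    have h4 := ih
    linarith

lemma ratio_mono (μ : ℝ) (hμ : 0 < μ) {x y : ℝ} (hx : 0 ≤ x) (hxy : x ≤ y) :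
    x / (μ + x) ≤ y / (μ + y) := by
  rw [div_le_div_iff₀ (by linarith) (by linarith)]
  nlinarith

lemma sum_pe_div (α S : ℕ → ℝ) (μ ωc : ℝ) (hμ : 0 < μ) (hω : 0 < ωc)
    (hS : ∀ k, 0 ≤ S k) (hαmono : ∀ k, α (k + 1) ≤ α k) (hα : ∀ k, 0 < α k ∧ α k ≤ 1)
    (hαdiv : Tendsto (fun n => ∑ k ∈ Finset.range n, α k) atTop atTop)
    (T : ℕ) (hT : 1 ≤ T) (hPE : ∀ k, ωc ≤ ∑ t ∈ Finset.range T, S (k + t)) :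
    Tendsto (fun n => ∑ j ∈ Finset.range n, α j * (S j / (μ + S j))) atTop atTop := by
  have hanti : Antitone α := antitone_nat_of_succ_le hαmono
  set a : ℕ → ℝ := fun j => α j * (S j / (μ + S j)) with ha
  have ha0 : ∀ j, 0 ≤ a j := fun j => mul_nonneg (hα j).1.le
    (div_nonneg (hS j) (by linarith [hS j]))
  set g : ℕ → ℝ := fun n => ∑ j ∈ Finset.range n, a j with hg
  have hgmono : Monotone g := by
    intro p q hpq
    exact Finset.sum_le_sum_of_subset_of_nonneg (Finset.range_subset_range.2 hpq)
      (fun j _ _ => ha0 j)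
  -- block decomposition
  have hblock : ∀ n : ℕ, ∀ b : ℕ → ℝ, ∑ j ∈ Finset.range (n * T), b j
      = ∑ i ∈ Finset.range n, ∑ t ∈ Finset.range T, b (i * T + t) := by
    intro n b
    induction n with
    | zero => simp
    | succ n ih =>
      rw [show (n + 1) * T = n * T + T by ring, Finset.sum_range_add, ih,
        Finset.sum_range_succ]
  -- lower bound for each block
  have hblock_lb : ∀ i : ℕ,
      α ((i + 1) * T) * (ωc / (μ + ωc)) ≤ ∑ t ∈ Finset.range T, a (i * T + t) := by
    intro i
    have hstep1 : ∀ t ∈ Finset.range T,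
        α ((i + 1) * T) * (S (i * T + t) / (μ + S (i * T + t))) ≤ a (i * T + t) := by
      intro t ht
      have hle : i * T + t ≤ (i + 1) * T := by
        have := Finset.mem_range.1 ht
        nlinarith
      exact mul_le_mul_of_nonneg_right (hanti hle)
        (div_nonneg (hS _) (by linarith [hS (i * T + t)]))
    refine le_trans ?_ (Finset.sum_le_sum hstep1)
    rw [← Finset.mul_sum]
    refine mul_le_mul_of_nonneg_left ?_ (hα _).1.le
    refine le_trans (ratio_mono μ hμ hω.le (hPE (i * T))) ?_
    have := ratio_subadd μ hμ (fun t => S (i * T + t)) (fun t => hS _) T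
    simpa using this
  -- divergence of the subsampled α sums
  have hαT : Tendsto (fun n => ∑ i ∈ Finset.range n, α (i * T)) atTop atTop := by
    have hcomp : Tendsto (fun n => n * T) atTop atTop :=
      tendsto_atTop_mono (fun n => Nat.le_mul_of_pos_right n hT) tendsto_id
    have h1 : Tendsto (fun n => (∑ j ∈ Finset.range (n * T), α j) / (T : ℝ))
        atTop atTop :=
      (hαdiv.comp hcomp).atTop_div_const (by positivity)
    refine tendsto_atTop_mono (fun n => ?_) h1
    rw [div_le_iff₀ (by positivity : (0:ℝ) < (T:ℝ))]
    rw [hblock n α]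
    rw [Finset.sum_mul]
    refine Finset.sum_le_sum fun i _ => ?_
    have : ∑ t ∈ Finset.range T, α (i * T + t) ≤ ∑ t ∈ Finset.range T, α (i * T) :=
      Finset.sum_le_sum fun t _ => hanti (Nat.le_add_right _ _)
    simpa [mul_comm] using this
  have hαT1 : Tendsto (fun n => ∑ i ∈ Finset.range n, α ((i + 1) * T)) atTop atTop := by
    have h1 : Tendsto (fun n => ∑ i ∈ Finset.range (n + 1), α (i * T)) atTop atTop :=
      hαT.comp (tendsto_add_atTop_nat 1)
    have h2 : Tendsto (fun n => (∑ i ∈ Finset.range (n + 1), α (i * T)) + (-(α 0)))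
        atTop atTop := tendsto_atTop_add_const_right atTop _ h1
    refine Tendsto.congr (fun n => ?_) h2
    rw [Finset.sum_range_succ']
    simp [add_comm]
  -- conclude along the subsequence n * T
  have hsub : Tendsto (fun n => g (n * T)) atTop atTop := by
    have h1 : Tendsto (fun n => (∑ i ∈ Finset.range n, α ((i + 1) * T)) * (ωc / (μ + ωc)))
        atTop atTop := hαT1.atTop_mul_const (by positivity)
    refine tendsto_atTop_mono (fun n => ?_) h1
    show _ ≤ ∑ j ∈ Finset.range (n * T), a j
    rw [hblock n a, Finset.sum_mul]
    exact Finset.sum_le_sum fun i _ => hblock_lb i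
  rw [tendsto_atTop]
  intro b
  obtain ⟨N, hN⟩ := (tendsto_atTop.1 hsub b).exists
  filter_upwards [eventually_ge_atTop (N * T)] with n hn
  exact le_trans hN (hgmono hn)


end DremAux

/-- Theorem 1: scalar mean-square convergence of the DREM-based distributed
estimator.  The aggregated noises `N k` form an independent family of centered
Gaussian random variables with variance at most `S k * C`, the step sizes
`α k` are non-increasing, in `(0,1]`, non-summable and vanishing, and the
collective regressor signal `S` satisfies the Local-PE condition.  Then the
error process `X` driven by the least-mean-squares recursion converges to `0`
in mean square. -/
theorem drem_estimator_mean_square_convergence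
    {Ω : Type*} [MeasurableSpace Ω] {P : Measure Ω} [IsProbabilityMeasure P]
    (N : ℕ → Ω → ℝ) (σ : ℕ → NNReal)
    (hNmeas : ∀ k, Measurable (N k))
    (hNgauss : ∀ k, Measure.map (N k) P = gaussianReal 0 (σ k))
    (hNindep : iIndepFun N P)
    (C : ℝ) (hC : 0 ≤ C)
    (S : ℕ → ℝ) (hS : ∀ k, 0 ≤ S k)
    (hvar : ∀ k, (σ k : ℝ) ≤ S k * C)
    (μ : ℝ) (hμ : 0 < μ)
    (α : ℕ → ℝ) (hαmono : ∀ k, α (k + 1) ≤ α k)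
    (hα : ∀ k, 0 < α k ∧ α k ≤ 1)
    (hαdiv : Tendsto (fun n => ∑ k ∈ Finset.range n, α k) atTop atTop)
    (hαlim : Tendsto α atTop (nhds 0))
    (ω : ℝ) (hω : 0 < ω) (T : ℕ) (hT : 1 ≤ T)
    (hPE : ∀ k, ω ≤ ∑ t ∈ Finset.range T, S (k + t))
    (X : ℕ → Ω → ℝ) (x₀ : ℝ) (hX0 : X 0 = fun _ => x₀)
    (hXrec : ∀ k, X (k + 1) = fun ωp =>
      (1 - α k * S k / (μ + S k)) * X k ωp + (α k / (μ + S k)) * N k ωp) :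
    Tendsto (fun k => ∫ ωp, X k ωp ^ 2 ∂P) atTop (nhds 0) := by
  have hμS : ∀ k, 0 < μ + S k := fun k => by linarith [hS k]
  -- moments of the noise
  have hNsqInt : ∀ k, Integrable (fun ωp => (N k ωp) ^ 2) P := by
    intro k
    have hg : AEStronglyMeasurable (fun x : ℝ => x ^ 2) (Measure.map (N k) P) := by
      rw [hNgauss k]
      exact (continuous_pow 2).aestronglyMeasurable
    have := (integrable_map_measure hg (hNmeas k).aemeasurable).1
    rw [hNgauss k] at this
    exact this (integrable_sq_gaussianReal0 (σ k))
  have hNmem : ∀ k, MemLp (N k) 2 P := fun k =>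
    (memLp_two_iff_integrable_sq (hNmeas k).aestronglyMeasurable).2 (hNsqInt k)
  have hNmean : ∀ k, ∫ ωp, N k ωp ∂P = 0 := by
    intro k
    have hg : AEStronglyMeasurable (fun x : ℝ => x) (Measure.map (N k) P) := by
      rw [hNgauss k]; exact aestronglyMeasurable_id
    have h := integral_map (hNmeas k).aemeasurable hg
    rw [hNgauss k, integral_id_gaussianReal0 (σ k)] at h
    exact h.symm
  have hNsq : ∀ k, ∫ ωp, (N k ωp) ^ 2 ∂P = (σ k : ℝ) := by
    intro k
    have hg : AEStronglyMeasurable (fun x : ℝ => x ^ 2) (Measure.map (N k) P) := by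
      rw [hNgauss k]
      exact (continuous_pow 2).aestronglyMeasurable
    have h := integral_map (hNmeas k).aemeasurable hg
    rw [hNgauss k, integral_sq_gaussianReal0 (σ k)] at h
    exact h.symm
  -- square integrability of the error process
  have hXmem : ∀ k, MemLp (X k) 2 P := by
    intro k
    induction k with
    | zero => rw [hX0]; exact memLp_const x₀
    | succ k ih =>
      rw [hXrec k]
      exact (ih.const_mul _).add ((hNmem k).const_mul _)
  -- representation of `X k` as a function of the noises with index `< k`
  have hrep : ∀ k, ∃ g : ({x // x ∈ Finset.range k} → ℝ) → ℝ,
      Measurable g ∧ ∀ ωp, X k ωp = g (fun i => N i.1 ωp) := by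
    intro k
    induction k with
    | zero => exact ⟨fun _ => x₀, measurable_const, fun ωp => by rw [hX0]⟩
    | succ k ih =>
      obtain ⟨g, hgm, hgeq⟩ := ih
      refine ⟨fun v => (1 - α k * S k / (μ + S k)) *
          g (fun i => v ⟨i.1, Finset.mem_range.2
            (Nat.lt_succ_of_lt (Finset.mem_range.1 i.2))⟩) +
          (α k / (μ + S k)) * v ⟨k, Finset.mem_range.2 (Nat.lt_succ_self k)⟩, ?_, ?_⟩
      · have hres : Measurable fun (v : {x // x ∈ Finset.range (k+1)} → ℝ) =>
            (fun i : {x // x ∈ Finset.range k} => v ⟨i.1, Finset.mem_range.2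
              (Nat.lt_succ_of_lt (Finset.mem_range.1 i.2))⟩) :=
          measurable_pi_lambda _ (fun i => measurable_pi_apply _)
        exact (measurable_const.mul (hgm.comp hres)).add
          (measurable_const.mul (measurable_pi_apply _))
      · intro ωp
        rw [hXrec k]
        simp only
        rw [hgeq ωp]
  -- independence of `X k` and `N k`
  have hindep : ∀ k, IndepFun (X k) (N k) P := by
    intro k
    obtain ⟨g, hgm, hgeq⟩ := hrep k
    have hsets : Disjoint (Finset.range k) ({k} : Finset ℕ) := by simp
    have h := hNindep.indepFun_finset (Finset.range k) {k} hsets hNmeas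
    have h2 := h.comp hgm
      (measurable_pi_apply (⟨k, Finset.mem_singleton_self k⟩ : {x // x ∈ ({k} : Finset ℕ)}))
    have hX : X k = (g ∘ fun a (i : {x // x ∈ Finset.range k}) => N i.1 a) :=
      funext hgeq
    rw [hX]
    exact h2
  -- the second-moment recursion
  have hrec2 : ∀ k, (∫ ωp, X (k + 1) ωp ^ 2 ∂P)
      = (1 - α k * S k / (μ + S k)) ^ 2 * (∫ ωp, X k ωp ^ 2 ∂P)
        + (α k / (μ + S k)) ^ 2 * (σ k : ℝ) := by
    intro k
    set c := 1 - α k * S k / (μ + S k) with hc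
    set d := α k / (μ + S k) with hd
    have iY2 : Integrable (fun ωp => X k ωp ^ 2) P := (hXmem k).integrable_sq
    have iZ2 : Integrable (fun ωp => N k ωp ^ 2) P := hNsqInt k
    have iY : Integrable (X k) P := (hXmem k).integrable one_le_two
    have iZ : Integrable (N k) P := (hNmem k).integrable one_le_two
    have iYZ : Integrable (fun ωp => X k ωp * N k ωp) P :=
      (hindep k).integrable_mul iY iZ
    have hpt : ∀ ωp, (c * X k ωp + d * N k ωp) ^ 2
        = c ^ 2 * X k ωp ^ 2 + (d ^ 2 * N k ωp ^ 2
          + (2 * c * d) * (X k ωp * N k ωp)) := fun ωp => by ring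
    rw [hXrec k]
    simp only [← hc, ← hd]
    calc ∫ ωp, (c * X k ωp + d * N k ωp) ^ 2 ∂P
        = ∫ ωp, (c ^ 2 * X k ωp ^ 2 + (d ^ 2 * N k ωp ^ 2
            + (2 * c * d) * (X k ωp * N k ωp))) ∂P := by
          congr 1 with ωp
          exact hpt ωp
      _ = (∫ ωp, c ^ 2 * X k ωp ^ 2 ∂P) + ((∫ ωp, d ^ 2 * N k ωp ^ 2 ∂P)
            + ∫ ωp, (2 * c * d) * (X k ωp * N k ωp) ∂P) := by
          have iSum : Integrable (fun ωp => d ^ 2 * N k ωp ^ 2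
              + (2 * c * d) * (X k ωp * N k ωp)) P :=
            (iZ2.const_mul _).add (iYZ.const_mul _)
          rw [integral_add (iY2.const_mul _) iSum,
            integral_add (iZ2.const_mul _) (iYZ.const_mul _)]
      _ = c ^ 2 * (∫ ωp, X k ωp ^ 2 ∂P) + (d ^ 2 * (σ k : ℝ) + 0) := by
          have hXN : ∫ ωp, X k ωp * N k ωp ∂P
              = (∫ ωp, X k ωp ∂P) * ∫ ωp, N k ωp ∂P :=
            (hindep k).integral_fun_mul_eq_mul_integral iY.aestronglyMeasurable iZ.aestronglyMeasurable
          rw [integral_const_mul, integral_const_mul, integral_const_mul, hNsq k,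
            hXN, hNmean k]
          ring_nf
      _ = c ^ 2 * (∫ ωp, X k ωp ^ 2 ∂P) + d ^ 2 * (σ k : ℝ) := by ring
  -- translate into the deterministic recursion and conclude
  set m : ℕ → ℝ := fun k => ∫ ωp, X k ωp ^ 2 ∂P with hm
  set a : ℕ → ℝ := fun k => α k * (S k / (μ + S k)) with ha
  have hm0 : ∀ k, 0 ≤ m k := fun k => integral_nonneg fun ωp => sq_nonneg _
  have ha0 : ∀ k, 0 ≤ a k := fun k =>
    mul_nonneg (hα k).1.le (div_nonneg (hS k) (hμS k).le)
  have ha1 : ∀ k, a k ≤ 1 := by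
    intro k
    have h1 : S k / (μ + S k) ≤ 1 := by
      rw [div_le_one (hμS k)]; linarith
    have := mul_le_mul (hα k).2 h1 (div_nonneg (hS k) (hμS k).le) zero_le_one
    simpa using this
  have hMrec : ∀ k, m (k + 1) ≤ (1 - a k) * m k + a k * ((C / μ) * α k) := by
    intro k
    have hcoef : α k * S k / (μ + S k) = a k := by
      rw [ha]; ring
    have h0 := hrec2 k
    rw [hcoef] at h0
    have h1 : (1 - a k) ^ 2 * m k ≤ (1 - a k) * m k := by
      have : (1 - a k) ^ 2 ≤ 1 - a k := by nlinarith [ha0 k, ha1 k]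
      exact mul_le_mul_of_nonneg_right this (hm0 k)
    have h2 : (α k / (μ + S k)) ^ 2 * (σ k : ℝ) ≤ a k * ((C / μ) * α k) := by
      have hb1 : (α k / (μ + S k)) ^ 2 * (σ k : ℝ)
          ≤ (α k / (μ + S k)) ^ 2 * (S k * C) :=
        mul_le_mul_of_nonneg_left (hvar k) (sq_nonneg _)
      have hb2 : (α k / (μ + S k)) ^ 2 * (S k * C)
          = a k * (α k * C / (μ + S k)) := by
        rw [ha]
        field_simp
      have hb3 : α k * C / (μ + S k) ≤ α k * C / μ :=
        div_le_div_of_nonneg_left (mul_nonneg (hα k).1.le hC) hμ (by linarith [hS k])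
      have hb4 : a k * (α k * C / (μ + S k)) ≤ a k * ((C / μ) * α k) := by
        refine le_trans (mul_le_mul_of_nonneg_left hb3 (ha0 k)) ?_
        apply le_of_eq
        ring
      linarith
    have : m (k + 1) = (1 - a k) ^ 2 * m k + (α k / (μ + S k)) ^ 2 * (σ k : ℝ) := h0
    linarith
  have hclim : Tendsto (fun k => (C / μ) * α k) atTop (nhds 0) := by
    have := hαlim.const_mul (C / μ)
    simpa using this
  have hc0 : ∀ k, 0 ≤ (C / μ) * α k := fun k =>
    mul_nonneg (div_nonneg hC hμ.le) (hα k).1.le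
  have hdiv : Tendsto (fun n => ∑ j ∈ Finset.range n, a j) atTop atTop := by
    have := sum_pe_div α S μ ω hμ hω hS hαmono hα hαdiv T hT hPE
    exact this
  exact det_tendsto m a (fun k => (C / μ) * α k) hm0 ha0 ha1 hc0 hclim hdiv hMrec
end

section
/- Mean-square convergence of a contracting stochastic recursion: Let (Ω, F, P) be a probability space and X : ℕ → Ω → ℝ a sequence of square-integrable random variables satisfying X(k+1) = (1 − β(k))·X(k) + γ(k)·W(k), where for each k the numbers β(k) ∈ [0,1] and γ(k) ∈ ℝ are deterministic, and W(k) is a square-integrable random variable with E[W(k)] = 0 that is independent of X(k). Set ε(k) := γ(k)²·E[W(k)²]. Assume ∑_{k=0}^∞ β(k) = ∞ and that there exists a sequence c(k) → 0 with ε(k) ≤ c(k)·β(k) for all k. Then lim_{k→∞} E[X(k)²] = 0. -/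
open MeasureTheory ProbabilityTheory Filter

/-- Deterministic lemma: a contracting recursion with vanishing noise input goes to 0. -/
lemma aux_contract_tendsto_zero (a β c : ℕ → ℝ)
    (ha : ∀ k, 0 ≤ a k)
    (hβ : ∀ k, β k ∈ Set.Icc (0 : ℝ) 1)
    (hrec : ∀ k, a (k + 1) ≤ (1 - β k) * a k + c k * β k)
    (hβdiv : Tendsto (fun n => ∑ k ∈ Finset.range n, β k) atTop atTop)
    (hc : Tendsto c atTop (nhds 0)) :
    Tendsto a atTop (nhds 0) := by
  rw [Metric.tendsto_atTop]
  intro ε hε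
  -- choose N with c k ≤ ε/4 for k ≥ N
  obtain ⟨N, hN⟩ := (Metric.tendsto_atTop.mp hc (ε / 4) (by linarith)).imp
    (fun N h => h)
  have hcN : ∀ k ≥ N, c k ≤ ε / 4 := fun k hk => by
    have := hN k hk
    rw [Real.dist_eq, sub_zero] at this
    exact le_of_lt (lt_of_abs_lt this)
  -- key induction: a n - ε/4 ≤ a N * ∏_{k ∈ [N, n)} (1 - β k)
  have key : ∀ n ≥ N, a n - ε / 4 ≤ a N * ∏ k ∈ Finset.Ico N n, (1 - β k) := by
    intro n hn
    induction n with
    | zero =>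
        have : N = 0 := Nat.le_zero.mp hn
        simp [this]; linarith
    | succ m ih =>
        rcases Nat.lt_or_ge N (m + 1) with h | h
        · have hm : N ≤ m := Nat.lt_succ_iff.mp h
          have ihm := ih hm
          have hβm := hβ m
          have h1 : (0:ℝ) ≤ 1 - β m := by linarith [hβm.2]
          have h2 : a (m + 1) - ε / 4 ≤ (1 - β m) * (a m - ε / 4) := by
            have := hrec m
            have hcm := hcN m hm
            have hβm1 := hβm.1
            nlinarith
          have h3 : (1 - β m) * (a m - ε / 4) ≤
              (1 - β m) * (a N * ∏ k ∈ Finset.Ico N m, (1 - β k)) :=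
            mul_le_mul_of_nonneg_left ihm h1
          have h4 : ∏ k ∈ Finset.Ico N (m + 1), (1 - β k)
              = (∏ k ∈ Finset.Ico N m, (1 - β k)) * (1 - β m) :=
            Finset.prod_Ico_succ_top hm _
          rw [h4]; nlinarith
        · have : N = m + 1 := le_antisymm hn h
          simp [this]; linarith
  -- the product tends to 0; bound by exp of minus the partial sums
  have hprod : ∀ n ≥ N, a N * ∏ k ∈ Finset.Ico N n, (1 - β k)
      ≤ a N * Real.exp ((∑ k ∈ Finset.range N, β k) - ∑ k ∈ Finset.range n, β k) := by
    intro n hn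
    have hle : (∏ k ∈ Finset.Ico N n, (1 - β k)) ≤ ∏ k ∈ Finset.Ico N n, Real.exp (-β k) := by
      apply Finset.prod_le_prod
      · intro k _; linarith [(hβ k).2]
      · intro k _
        have := Real.add_one_le_exp (-β k)
        linarith
    have heq : (∏ k ∈ Finset.Ico N n, Real.exp (-β k))
        = Real.exp ((∑ k ∈ Finset.range N, β k) - ∑ k ∈ Finset.range n, β k) := by
      rw [← Real.exp_sum]
      congr 1
      rw [Finset.sum_neg_distrib, Finset.sum_Ico_eq_sub _ hn]
      ring
    exact mul_le_mul_of_nonneg_left (heq ▸ hle) (ha N)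
  -- a N * exp(...) → 0
  have hexp : Tendsto (fun n => a N * Real.exp ((∑ k ∈ Finset.range N, β k)
      - ∑ k ∈ Finset.range n, β k)) atTop (nhds 0) := by
    have h1 : Tendsto (fun n => (∑ k ∈ Finset.range N, β k)
        - ∑ k ∈ Finset.range n, β k) atTop atBot := by
      have := tendsto_atBot_add_const_left atTop (∑ k ∈ Finset.range N, β k)
        (tendsto_neg_atTop_atBot.comp hβdiv)
      refine this.congr fun n => ?_
      simp [Function.comp, sub_eq_add_neg]
    have := Real.tendsto_exp_atBot.comp h1
    simpa using this.const_mul (a N)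
  obtain ⟨M, hM⟩ := Metric.tendsto_atTop.mp hexp (ε / 4) (by linarith)
  refine ⟨max N M, fun n hn => ?_⟩
  have hnN : N ≤ n := le_trans (le_max_left _ _) hn
  have hnM : M ≤ n := le_trans (le_max_right _ _) hn
  have h1 := key n hnN
  have h2 := hprod n hnN
  have h3 := hM n hnM
  rw [Real.dist_eq, sub_zero] at h3 ⊢
  have h4 : a N * Real.exp ((∑ k ∈ Finset.range N, β k) - ∑ k ∈ Finset.range n, β k) < ε / 4 :=
    lt_of_abs_lt h3
  rw [abs_of_nonneg (ha n)]
  linarith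

/-- Mean-square convergence of a contracting stochastic recursion. -/
theorem contracting_stochastic_recursion_tendsto_zero
    {Ω : Type*} [MeasurableSpace Ω] {P : Measure Ω} [IsProbabilityMeasure P]
    (X : ℕ → Ω → ℝ) (W : ℕ → Ω → ℝ) (β γ : ℕ → ℝ)
    (hXL2 : ∀ k, MemLp (X k) 2 P)
    (hWL2 : ∀ k, MemLp (W k) 2 P)
    (hβ : ∀ k, β k ∈ Set.Icc (0 : ℝ) 1)
    (hrec : ∀ k, X (k + 1) = fun ω => (1 - β k) * X k ω + γ k * W k ω)
    (hWmean : ∀ k, ∫ ω, W k ω ∂P = 0)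
    (hindep : ∀ k, IndepFun (X k) (W k) P)
    (ε : ℕ → ℝ) (hε : ∀ k, ε k = γ k ^ 2 * ∫ ω, W k ω ^ 2 ∂P)
    (hβdiv : Tendsto (fun n => ∑ k ∈ Finset.range n, β k) atTop atTop)
    (c : ℕ → ℝ) (hc : Tendsto c atTop (nhds 0))
    (hεβ : ∀ k, ε k ≤ c k * β k) :
    Tendsto (fun k => ∫ ω, X k ω ^ 2 ∂P) atTop (nhds 0) := by
  set a : ℕ → ℝ := fun k => ∫ ω, X k ω ^ 2 ∂P with ha_def
  have ha : ∀ k, 0 ≤ a k := fun k => integral_nonneg (fun ω => sq_nonneg _)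
  have harec : ∀ k, a (k + 1) ≤ (1 - β k) * a k + c k * β k := by
    intro k
    have hXsq : Integrable (fun ω => X k ω ^ 2) P := (hXL2 k).integrable_sq
    have hWsq : Integrable (fun ω => W k ω ^ 2) P := (hWL2 k).integrable_sq
    have hXi : Integrable (X k) P := (hXL2 k).integrable one_le_two
    have hWi : Integrable (W k) P := (hWL2 k).integrable one_le_two
    have hXW : Integrable (fun ω => X k ω * W k ω) P := (hindep k).integrable_mul hXi hWi
    have hcross : ∫ ω, X k ω * W k ω ∂P = 0 := by
      have h := (hindep k).integral_mul_eq_mul_integral hXi.1 hWi.1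
      calc ∫ ω, X k ω * W k ω ∂P = ∫ ω, (X k * W k) ω ∂P := rfl
        _ = (∫ ω, X k ω ∂P) * ∫ ω, W k ω ∂P := h
        _ = 0 := by rw [hWmean k, mul_zero]
    have hexp : a (k + 1) = (1 - β k) ^ 2 * a k + γ k ^ 2 * ∫ ω, W k ω ^ 2 ∂P := by
      have h1 : a (k + 1) = ∫ ω, ((1 - β k) ^ 2 * X k ω ^ 2
          + (2 * (1 - β k) * γ k) * (X k ω * W k ω) + γ k ^ 2 * W k ω ^ 2) ∂P := by
        simp only [ha_def, hrec k]
        congr 1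
        funext ω
        ring
      have hf1 : Integrable (fun ω => (1 - β k) ^ 2 * X k ω ^ 2) P := hXsq.const_mul _
      have hf2 : Integrable (fun ω => 2 * (1 - β k) * γ k * (X k ω * W k ω)) P :=
        hXW.const_mul _
      have hf12 : Integrable (fun ω => (1 - β k) ^ 2 * X k ω ^ 2
          + 2 * (1 - β k) * γ k * (X k ω * W k ω)) P := hf1.add hf2
      have hf3 : Integrable (fun ω => γ k ^ 2 * W k ω ^ 2) P := hWsq.const_mul _
      rw [h1, integral_add hf12 hf3, integral_add hf1 hf2,
        integral_const_mul, integral_const_mul, integral_const_mul, hcross]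
      ring
    have hβk := hβ k
    have h2 : (1 - β k) ^ 2 * a k ≤ (1 - β k) * a k :=
      mul_le_mul_of_nonneg_right (by nlinarith [hβk.1, hβk.2]) (ha k)
    have h3 : γ k ^ 2 * ∫ ω, W k ω ^ 2 ∂P ≤ c k * β k := (hε k) ▸ hεβ k
    linarith [hexp]
  exact aux_contract_tendsto_zero a β c ha hβ harec hβdiv hc
end

section
/- Divergence of the contraction-coefficient series under Local-PE: Let μ > 0, let α : ℕ → ℝ be monotonically non-increasing with 0 < α(k) ≤ 1 for all k and ∑_{k=0}^∞ α(k) = ∞, and let S : ℕ → ℝ be nonnegative. Suppose there exist ω > 0 and T ∈ ℕ, T ≥ 1, such that ∑_{t=k}^{k+T-1} S(t) ≥ ω for all k. Define β(k) := α(k)·S(k)/(μ + S(k)). Then ∑_{k=0}^∞ β(k) = ∞. -/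
open Filter

/-- Divergence of the contraction-coefficient series under the Local-PE
condition. -/
theorem contraction_series_diverges (μ : ℝ) (hμ : 0 < μ)
    (α : ℕ → ℝ) (hαmono : ∀ k, α (k + 1) ≤ α k)
    (hα : ∀ k, 0 < α k ∧ α k ≤ 1)
    (hαdiv : Tendsto (fun n => ∑ k ∈ Finset.range n, α k) atTop atTop)
    (S : ℕ → ℝ) (hS : ∀ k, 0 ≤ S k)
    (ω : ℝ) (hω : 0 < ω) (T : ℕ) (hT : 1 ≤ T)
    (hPE : ∀ k, ω ≤ ∑ t ∈ Finset.range T, S (k + t))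
    (β : ℕ → ℝ) (hβ : ∀ k, β k = α k * S k / (μ + S k)) :
    Tendsto (fun n => ∑ k ∈ Finset.range n, β k) atTop atTop := by
  have hTpos : (0:ℝ) < T := by exact_mod_cast hT
  set x0 : ℝ := ω / T with hx0
  have hx0pos : 0 < x0 := div_pos hω hTpos
  set c : ℝ := x0 / (μ + x0) with hc
  have hcpos : 0 < c := div_pos hx0pos (by linarith)
  have hαanti : Antitone α := antitone_nat_of_succ_le hαmono
  have hβnonneg : ∀ k, 0 ≤ β k := fun k => by
    rw [hβ k]
    exact div_nonneg (mul_nonneg (hα k).1.le (hS k)) (by linarith [hS k])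
  -- block lower bound
  have hblk : ∀ m : ℕ, c * α ((m+1)*T) ≤ ∑ k ∈ Finset.Ico (m*T) ((m+1)*T), β k := by
    intro m
    obtain ⟨t, ht, htx⟩ : ∃ t ∈ Finset.range T, x0 ≤ S (m*T + t) := by
      by_contra h
      push_neg at h
      have hlt : ∑ t ∈ Finset.range T, S (m*T + t) < ∑ _t ∈ Finset.range T, x0 :=
        Finset.sum_lt_sum_of_nonempty ⟨0, Finset.mem_range.2 hT⟩ (fun i hi => h i hi)
      rw [Finset.sum_const, Finset.card_range, nsmul_eq_mul] at hlt
      have hTx0 : (T:ℝ) * x0 = ω := by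
        rw [hx0]; field_simp
      linarith [hPE (m*T)]
    have htT : t < T := Finset.mem_range.1 ht
    have hk0mem : m*T + t ∈ Finset.Ico (m*T) ((m+1)*T) := by
      rw [Finset.mem_Ico, Nat.succ_mul]
      omega
    have hsingle : β (m*T + t) ≤ ∑ k ∈ Finset.Ico (m*T) ((m+1)*T), β k :=
      Finset.single_le_sum (fun i _ => hβnonneg i) hk0mem
    have hαle : α ((m+1)*T) ≤ α (m*T + t) := by
      apply hαanti
      rw [Nat.succ_mul]; omega
    have hfrac : c ≤ S (m*T+t) / (μ + S (m*T+t)) := by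
      rw [hc, div_le_div_iff₀ (by linarith) (by linarith [hS (m*T+t)])]
      nlinarith [hS (m*T+t)]
    have : c * α ((m+1)*T) ≤ α (m*T+t) * (S (m*T+t) / (μ + S (m*T+t))) := by
      calc c * α ((m+1)*T) ≤ (S (m*T+t) / (μ + S (m*T+t))) * α (m*T+t) := by
            apply mul_le_mul hfrac hαle (hα _).1.le
            exact le_trans hcpos.le hfrac
        _ = α (m*T+t) * (S (m*T+t) / (μ + S (m*T+t))) := mul_comm _ _
    rw [hβ (m*T+t), mul_div_assoc] at hsingle
    linarith
  -- sum over n blocks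
  have hsumblk : ∀ n, c * ∑ m ∈ Finset.range n, α ((m+1)*T)
      ≤ ∑ k ∈ Finset.range (n*T), β k := by
    intro n
    induction n with
    | zero => simp
    | succ n ih =>
      rw [Finset.sum_range_succ, mul_add]
      have hsplit : ∑ k ∈ Finset.range (n*T), β k + ∑ k ∈ Finset.Ico (n*T) ((n+1)*T), β k
          = ∑ k ∈ Finset.range ((n+1)*T), β k := by
        simp only [Finset.range_eq_Ico]
        exact Finset.sum_Ico_consecutive _ (Nat.zero_le _)
          (Nat.mul_le_mul_right T (Nat.le_succ n))
      rw [← hsplit]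
      exact add_le_add ih (hblk n)
  -- compare α block heads with α partial sums
  have hαblk : ∀ n, ∑ k ∈ Finset.Ico T ((n+1)*T), α k
      ≤ (T:ℝ) * ∑ m ∈ Finset.range n, α ((m+1)*T) := by
    intro n
    induction n with
    | zero => simp
    | succ n ih =>
      rw [Finset.sum_range_succ, mul_add]
      have hsplit : ∑ k ∈ Finset.Ico T ((n+1)*T), α k
          + ∑ k ∈ Finset.Ico ((n+1)*T) ((n+2)*T), α k
          = ∑ k ∈ Finset.Ico T ((n+2)*T), α k := by
        apply Finset.sum_Ico_consecutive
        · exact Nat.le_mul_of_pos_left T (Nat.succ_pos n)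
        · exact Nat.mul_le_mul_right T (by omega)
      have hlast : ∑ k ∈ Finset.Ico ((n+1)*T) ((n+2)*T), α k ≤ (T:ℝ) * α ((n+1)*T) := by
        have hcard : (Finset.Ico ((n+1)*T) ((n+2)*T)).card = T := by
          rw [Nat.card_Ico]; rw [Nat.succ_mul ((n+1))]; omega
        calc ∑ k ∈ Finset.Ico ((n+1)*T) ((n+2)*T), α k
            ≤ ∑ _k ∈ Finset.Ico ((n+1)*T) ((n+2)*T), α ((n+1)*T) := by
              apply Finset.sum_le_sum
              intro i hi
              exact hαanti (Finset.mem_Ico.1 hi).1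
          _ = (T:ℝ) * α ((n+1)*T) := by
              rw [Finset.sum_const, hcard, nsmul_eq_mul]
      have : (n+1+1)*T = (n+2)*T := by ring_nf
      rw [this, ← hsplit]
      exact add_le_add ih hlast
  -- partial sums of α over Ico as difference
  have hIco : ∀ n, ∑ k ∈ Finset.Ico T ((n+1)*T), α k
      = (∑ k ∈ Finset.range ((n+1)*T), α k) - ∑ k ∈ Finset.range T, α k := by
    intro n
    simp only [Finset.range_eq_Ico]; rw [eq_sub_iff_add_eq, add_comm]
    exact Finset.sum_Ico_consecutive _ (Nat.zero_le _)
      (Nat.le_mul_of_pos_left T (Nat.succ_pos n))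
  -- the subsequence of partial β sums at n*T tends to atTop
  have hG : Tendsto (fun n => ∑ k ∈ Finset.range (n*T), β k) atTop atTop := by
    apply tendsto_atTop_mono
      (f := fun n => (c/T) * ((∑ k ∈ Finset.range ((n+1)*T), α k)
          - ∑ k ∈ Finset.range T, α k))
    · intro n
      have h1 := hαblk n
      have h2 := hsumblk n
      rw [hIco n] at h1
      have h3 : (c/T) * ((∑ k ∈ Finset.range ((n+1)*T), α k)
          - ∑ k ∈ Finset.range T, α k) ≤ (c/T) * ((T:ℝ) * ∑ m ∈ Finset.range n, α ((m+1)*T)) :=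
        mul_le_mul_of_nonneg_left h1 (by positivity)
      have h4 : (c/T) * ((T:ℝ) * ∑ m ∈ Finset.range n, α ((m+1)*T))
          = c * ∑ m ∈ Finset.range n, α ((m+1)*T) := by
        field_simp
      linarith
    · apply Tendsto.const_mul_atTop (by positivity : (0:ℝ) < c/T)
      apply tendsto_atTop_add_const_right
      apply hαdiv.comp
      apply tendsto_atTop_mono (f := id) _ tendsto_id
      intro n
      simp only [id]
      calc n ≤ n + 1 := Nat.le_succ n
        _ ≤ (n+1)*T := Nat.le_mul_of_pos_right _ hT
  -- conclude by monotonicity of partial sums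
  have hmono : Monotone (fun n => ∑ k ∈ Finset.range n, β k) := by
    apply monotone_nat_of_le_succ
    intro n
    rw [Finset.sum_range_succ]
    linarith [hβnonneg n]
  exact tendsto_atTop_of_monotone_of_subseq hmono (φ := fun n => n*T) hG
end

section
/- Convergence of a perturbed contraction (deterministic comparison lemma): Let v : ℕ → ℝ be nonnegative, let β : ℕ → ℝ with β(k) ∈ [0,1] for all k and ∑_{k=0}^∞ β(k) = ∞, and let ε : ℕ → ℝ be nonnegative. Suppose v(k+1) ≤ (1 − β(k))·v(k) + ε(k) for all k, and that there exists a sequence c(k) → 0 with ε(k) ≤ c(k)·β(k) for all k. Then lim_{k→∞} v(k) = 0. -/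
/-!
Fix `δ > 0`. Since `c k → 0`, eventually `ε k ≤ δ β k`, and then the recursion says that
`v k - δ` is eventually contracted by the factor `1 - β k`. Because `1 - x ≤ exp (-x)`,
the products `∏ (1 - β i)` are dominated by `exp (-∑ β i) → 0`, so `v k - δ` is eventually
below any positive threshold, i.e. `limsup v ≤ δ`.
-/

open Filter Topology Finset

theorem le_mul_prod_of_le_mul {w r : ℕ → ℝ} (hr : ∀ k, 0 ≤ r k)
    (h : ∀ k, w (k + 1) ≤ r k * w k) (n : ℕ) :
    w n ≤ w 0 * ∏ i ∈ range n, r i := by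
  induction n with
  | zero => simp
  | succ n ih =>
    calc w (n + 1) ≤ r n * w n := h n
      _ ≤ r n * (w 0 * ∏ i ∈ range n, r i) := mul_le_mul_of_nonneg_left ih (hr n)
      _ = w 0 * ∏ i ∈ range (n + 1), r i := by rw [prod_range_succ]; ring

theorem prod_one_sub_le_exp_neg_sum {β : ℕ → ℝ} (hβ : ∀ k, β k ≤ 1) (n : ℕ) :
    ∏ i ∈ range n, (1 - β i) ≤ Real.exp (-∑ i ∈ range n, β i) := by
  rw [← sum_neg_distrib, Real.exp_sum]
  exact prod_le_prod (fun i _ => sub_nonneg.2 (hβ i)) fun i _ => Real.one_sub_le_exp_neg (β i)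

theorem tendsto_prod_one_sub_of_not_summable {β : ℕ → ℝ} (hβ : ∀ k, β k ∈ Set.Icc (0 : ℝ) 1)
    (hdiv : ¬Summable β) :
    Tendsto (fun n => ∏ i ∈ range n, (1 - β i)) atTop (𝓝 0) := by
  have hsum : Tendsto (fun n => ∑ i ∈ range n, β i) atTop atTop :=
    (not_summable_iff_tendsto_nat_atTop_of_nonneg fun k => (hβ k).1).1 hdiv
  exact squeeze_zero (fun n => prod_nonneg fun i _ => sub_nonneg.2 (hβ i).2)
    (prod_one_sub_le_exp_neg_sum fun k => (hβ k).2)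
    (Real.tendsto_exp_atBot.comp (tendsto_neg_atTop_atBot.comp hsum))

theorem eventually_lt_of_le_one_sub_mul_add {v β ε : ℕ → ℝ} {δ δ' : ℝ}
    (hβ : ∀ k, β k ∈ Set.Icc (0 : ℝ) 1) (hdiv : ¬Summable β)
    (hrec : ∀ k, v (k + 1) ≤ (1 - β k) * v k + ε k)
    (hε : ∀ᶠ k in atTop, ε k ≤ δ * β k) (hδ : δ < δ') :
    ∀ᶠ k in atTop, v k < δ' := by
  obtain ⟨N, hN⟩ := eventually_atTop.1 hε
  have hcontract : ∀ n, v (n + 1 + N) - δ ≤ (1 - β (n + N)) * (v (n + N) - δ) := fun n => by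
    have hstep := hrec (n + N)
    rw [Nat.add_right_comm] at hstep
    linear_combination hstep + hN (n + N) (Nat.le_add_left N n)
  have hprod : Tendsto (fun n => (v N - δ) * ∏ i ∈ range n, (1 - β (i + N))) atTop (𝓝 0) := by
    simpa using (tendsto_prod_one_sub_of_not_summable (fun k => hβ (k + N))
      ((summable_nat_add_iff N).not.2 hdiv)).const_mul (v N - δ)
  have hshift : ∀ᶠ n in atTop, v (n + N) < δ' := by
    filter_upwards [hprod.eventually (gt_mem_nhds (sub_pos.2 hδ))] with n hn
    have := le_mul_prod_of_le_mul (w := fun n => v (n + N) - δ)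
      (fun k => sub_nonneg.2 (hβ (k + N)).2) hcontract n
    simp only [zero_add] at this
    linarith
  rwa [← map_add_atTop_eq_nat N, eventually_map]

theorem perturbed_contraction_tendsto_zero_general (v β ε c : ℕ → ℝ)
    (hv : ∀ k, 0 ≤ v k)
    (hβ : ∀ k, β k ∈ Set.Icc (0 : ℝ) 1)
    (hβdiv : Tendsto (fun n => ∑ k ∈ Finset.range n, β k) atTop atTop)
    (hrec : ∀ k, v (k + 1) ≤ (1 - β k) * v k + ε k)
    (hc : Tendsto c atTop (nhds 0))
    (hεβ : ∀ k, ε k ≤ c k * β k) :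
    Tendsto v atTop (nhds 0) := by
  have hdiv : ¬Summable β :=
    (not_summable_iff_tendsto_nat_atTop_of_nonneg fun k => (hβ k).1).2 hβdiv
  refine tendsto_order.2 ⟨fun a ha => Eventually.of_forall fun k => ha.trans_le (hv k),
    fun a ha => ?_⟩
  have hε : ∀ᶠ k in atTop, ε k ≤ a / 2 * β k := by
    filter_upwards [hc.eventually (ge_mem_nhds (half_pos ha))] with k hk
    exact (hεβ k).trans (mul_le_mul_of_nonneg_right hk (hβ k).1)
  exact eventually_lt_of_le_one_sub_mul_add hβ hdiv hrec hε (half_lt_self ha)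

/-- Convergence of a perturbed contraction (deterministic comparison lemma). -/
theorem perturbed_contraction_tendsto_zero (v β ε c : ℕ → ℝ)
    (hv : ∀ k, 0 ≤ v k)
    (hβ : ∀ k, β k ∈ Set.Icc (0 : ℝ) 1)
    (hβdiv : Tendsto (fun n => ∑ k ∈ Finset.range n, β k) atTop atTop)
    (hε : ∀ k, 0 ≤ ε k)
    (hrec : ∀ k, v (k + 1) ≤ (1 - β k) * v k + ε k)
    (hc : Tendsto c atTop (nhds 0))
    (hεβ : ∀ k, ε k ≤ c k * β k) :
    Tendsto v atTop (nhds 0) :=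
  perturbed_contraction_tendsto_zero_general v β ε c hv hβ hβdiv hrec hc hεβ
end
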